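/- (Special case: two unconnected stable systems are separable at steady state.) Let J denote the 2×2 real matrix [[0,1],[-1,0]]. For k = 1, 2, let A_k be a real 2×2 Hurwitz matrix, B_k a real 2×m_k matrix, S_{wk} a real symmetric m_k×m_k matrix, and T_{wk} a Hermitian m_k×m_k complex matrix with S_{wk} + T_{wk} positive semidefinite, such that A_k·J + J·A_kᵀ − i·B_k·T_{wk}·B_kᵀ = 0. If the real symmetric 4×4 matrix P satisfies diag(A₁,A₂)·P + P·diag(A₁,A₂)ᵀ + diag(B₁S_{w1}B₁ᵀ, B₂S_{w2}B₂ᵀ) = 0, then P + i·diag(J, −J) is positive semidefinite. In particular, two independent, unconnected stable Gaussian systems, even if initially entangled, become separable at steady state. -/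

import Mathlib

open Matrix
open scoped ComplexOrder

/-- A complex square matrix is Hurwitz if every eigenvalue (i.e. every element of its
spectrum) has strictly negative real part. -/
def Matrix.IsHurwitz {k : Type*} [Fintype k] [DecidableEq k] (A : Matrix k k ℂ) : Prop :=
  ∀ μ ∈ spectrum ℂ A, μ.re < 0

/-- The complexification of a real matrix. -/
def Matrix.cplx {k l : Type*} (A : Matrix k l ℝ) : Matrix k l ℂ :=
  A.map Complex.ofReal

/-- The 2×2 symplectic matrix `J = [[0,1],[-1,0]]`. -/
def Jmat : Matrix (Fin 2) (Fin 2) ℝ := !![0, 1; -1, 0]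

/-!
A Hurwitz `2×2` real matrix has negative trace and positive determinant. For two such matrices
`A₁`, `A₂` the Sylvester equation `A₁ X + X A₂ᵀ = 0` forces `X = 0` (Cayley–Hamilton turns it
into `X N = 0` with `N` invertible), so the off-diagonal blocks of `P` vanish. The diagonal
block `Q = P₁₁ + iJ` solves the Lyapunov equation `A Q + Q Aᵀ + D = 0` with the positive
semidefinite forcing term `D = B (S + T) Bᴴ`, and for `2×2` matrices its solution is explicit:
`-2 tr A det A • Q = det A • D + (A - tr A) D (A - tr A)ᴴ`, a positive combination of positive
semidefinite matrices. The second block `P₂₂ - iJ` is the transpose of `P₂₂ + iJ`, as `P` is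
symmetric and `J` antisymmetric.
-/

namespace Matrix

section cplx

variable {k l m : Type*}

@[simp] lemma cplx_apply (A : Matrix k l ℝ) (i : k) (j : l) : A.cplx i j = A i j := rfl

@[simp] lemma cplx_zero : (0 : Matrix k l ℝ).cplx = 0 := by ext; simp

@[simp] lemma cplx_add (A B : Matrix k l ℝ) : (A + B).cplx = A.cplx + B.cplx := by ext; simp

@[simp] lemma cplx_neg (A : Matrix k l ℝ) : (-A).cplx = -A.cplx := by ext; simp

@[simp] lemma cplx_mul [Fintype l] (A : Matrix k l ℝ) (B : Matrix l m ℝ) :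
    (A * B).cplx = A.cplx * B.cplx :=
  Matrix.map_mul (f := Complex.ofRealHom)

@[simp] lemma cplx_transpose (A : Matrix k l ℝ) : Aᵀ.cplx = A.cplxᵀ := rfl

lemma conjTranspose_cplx (A : Matrix k l ℝ) : A.cplxᴴ = A.cplxᵀ := by
  ext; simp

lemma cplx_fromBlocks {k' l' : Type*} (A : Matrix k l ℝ) (B : Matrix k l' ℝ)
    (C : Matrix k' l ℝ) (D : Matrix k' l' ℝ) :
    (fromBlocks A B C D).cplx = fromBlocks A.cplx B.cplx C.cplx D.cplx := by
  ext (i | i) (j | j) <;> rfl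

lemma trace_cplx [Fintype k] (A : Matrix k k ℝ) : A.cplx.trace = A.trace := by
  simp [trace]

lemma det_cplx [Fintype k] [DecidableEq k] (A : Matrix k k ℝ) : A.cplx.det = A.det :=
  (Complex.ofRealHom.map_det A).symm

end cplx

lemma mul_self_eq_trace_smul_sub_det_smul_one {R : Type*} [CommRing R]
    (M : Matrix (Fin 2) (Fin 2) R) : M * M = M.trace • M - M.det • 1 := by
  ext i j
  fin_cases i <;> fin_cases j <;>
    simp [mul_apply, trace_fin_two, det_fin_two] <;> ring

lemma mem_spectrum_cplx_of_sq_sub_trace_mul_add_det_eq_zero (A : Matrix (Fin 2) (Fin 2) ℝ)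
    {μ : ℂ} (hμ : μ ^ 2 - A.trace * μ + A.det = 0) : μ ∈ spectrum ℂ A.cplx := by
  apply mem_spectrum_of_isRoot_charpoly
  simpa [charpoly_fin_two, trace_cplx, det_cplx] using hμ

lemma trace_neg_and_det_pos_of_isHurwitz {A : Matrix (Fin 2) (Fin 2) ℝ}
    (hA : A.cplx.IsHurwitz) : A.trace < 0 ∧ 0 < A.det := by
  obtain ⟨μ, hμ⟩ : ∃ μ : ℂ, μ ^ 2 - A.trace * μ + A.det = 0 := by
    obtain ⟨μ, hμ⟩ := exists_quadratic_eq_zero one_ne_zero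
      (IsAlgClosed.exists_eq_mul_self (discrim 1 (-(A.trace : ℂ)) A.det))
    exact ⟨μ, by linear_combination hμ⟩
  have hν : (A.trace - μ) ^ 2 - A.trace * (A.trace - μ) + A.det = 0 := by
    linear_combination hμ
  have hre := hA μ (mem_spectrum_cplx_of_sq_sub_trace_mul_add_det_eq_zero A hμ)
  have hre' := hA _ (mem_spectrum_cplx_of_sq_sub_trace_mul_add_det_eq_zero A hν)
  -- `det A = μ (tr A - μ)` has real part `μ.re (tr A - μ).re + μ.im ^ 2`, real `μ` or not
  have hdet : (A.det : ℂ) = μ * (A.trace - μ) := by linear_combination hμ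
  have hdet_re := congrArg Complex.re hdet
  simp only [Complex.ofReal_re, Complex.mul_re, Complex.sub_re, Complex.sub_im,
    Complex.ofReal_im] at hdet_re hre'
  constructor <;> nlinarith [sq_nonneg μ.im, mul_pos_of_neg_of_neg hre hre']

lemma mul_mul_self_sub_trace_smul_add_det_smul_eq_zero {R n : Type*} [CommRing R] [Fintype n]
    [DecidableEq n] {A : Matrix (Fin 2) (Fin 2) R} {X : Matrix (Fin 2) n R} {B : Matrix n n R}
    (h : A * X = X * B) : X * (B * B - A.trace • B + A.det • 1) = 0 := by
  have hAAX : A * A * X = X * (B * B) := by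
    rw [Matrix.mul_assoc, h, ← Matrix.mul_assoc, h, Matrix.mul_assoc]
  calc X * (B * B - A.trace • B + A.det • 1)
      = (A * A - A.trace • A + A.det • 1) * X := by
        simp only [Matrix.mul_add, Matrix.mul_sub, Matrix.add_mul, Matrix.sub_mul,
          Matrix.mul_smul, Matrix.smul_mul, Matrix.mul_one, Matrix.one_mul, hAAX, h]
    _ = 0 := by rw [mul_self_eq_trace_smul_sub_det_smul_one]; simp

lemma det_smul_add_smul_one_fin_two {R : Type*} [CommRing R]
    (M : Matrix (Fin 2) (Fin 2) R) (c e : R) :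
    (c • M + e • 1).det = c ^ 2 * M.det + c * e * M.trace + e ^ 2 := by
  simp [det_fin_two, trace_fin_two]; ring

lemma eq_zero_of_mul_add_mul_transpose_eq_zero {A₁ A₂ X : Matrix (Fin 2) (Fin 2) ℝ}
    (ht₁ : A₁.trace < 0) (hd₁ : 0 < A₁.det) (ht₂ : A₂.trace < 0) (hd₂ : 0 < A₂.det)
    (h : A₁ * X + X * A₂ᵀ = 0) : X = 0 := by
  have hX := mul_mul_self_sub_trace_smul_add_det_smul_eq_zero (A := A₁) (X := X) (B := -A₂ᵀ)
    (by rw [Matrix.mul_neg]; exact eq_neg_of_add_eq_zero_left h)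
  have hN : -A₂ᵀ * -A₂ᵀ - A₁.trace • -A₂ᵀ + A₁.det • 1
      = (A₁.trace + A₂.trace) • A₂ᵀ + (A₁.det - A₂.det) • 1 := by
    rw [neg_mul_neg, mul_self_eq_trace_smul_sub_det_smul_one, trace_transpose, det_transpose]
    module
  -- this determinant is the resultant of the characteristic polynomials of `A₁` and `-A₂`
  have hdet : 0 < ((A₁.trace + A₂.trace) • A₂ᵀ + (A₁.det - A₂.det) • (1 : Matrix _ _ ℝ)).det := by
    rw [det_smul_add_smul_one_fin_two, trace_transpose, det_transpose]
    nlinarith [mul_pos_of_neg_of_neg ht₁ ht₂, sq_nonneg (A₁.det - A₂.det),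
      mul_pos (mul_pos_of_neg_of_neg ht₁ ht₂) (add_pos hd₁ hd₂),
      mul_pos (sq_pos_of_neg ht₁) hd₂, mul_pos (sq_pos_of_neg ht₂) hd₁]
  rw [hN] at hX
  exact ((isUnit_iff_isUnit_det _).mpr hdet.ne'.isUnit).mul_left_eq_zero.mp hX

/-- Conjugate the equation by `A - tr A • 1`, which satisfies `(A - tr A • 1) * A = -det A • 1`
by Cayley–Hamilton. -/
lemma smul_eq_of_mul_add_mul_transpose_add_eq_zero {R : Type*} [CommRing R]
    {A Q D : Matrix (Fin 2) (Fin 2) R} (h : A * Q + Q * Aᵀ + D = 0) :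
    (-(2 * A.trace * A.det)) • Q
      = A.det • D + (A - A.trace • 1) * D * (A - A.trace • 1)ᵀ := by
  obtain rfl : D = -(A * Q + Q * Aᵀ) := eq_neg_of_add_eq_zero_right h
  ext i j
  fin_cases i <;> fin_cases j <;>
    simp [mul_apply, trace_fin_two, det_fin_two, one_apply] <;> ring

lemma posSemidef_of_cplx_mul_add_mul_transpose_add_eq_zero {A : Matrix (Fin 2) (Fin 2) ℝ}
    (ht : A.trace < 0) (hd : 0 < A.det) {Q D : Matrix (Fin 2) (Fin 2) ℂ} (hD : D.PosSemidef)
    (h : A.cplx * Q + Q * A.cplxᵀ + D = 0) : Q.PosSemidef := by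
  set C := (A - A.trace • 1).cplx
  have hC : A.cplx - A.cplx.trace • 1 = C := by
    ext i j; by_cases hij : i = j <;> simp [C, trace_cplx, hij]
  have key := smul_eq_of_mul_add_mul_transpose_add_eq_zero h
  rw [hC, trace_cplx, det_cplx, ← conjTranspose_cplx] at key
  have hc : 0 < -(2 * A.trace * A.det) := by nlinarith
  have hQ : Q = ((-(2 * A.trace * A.det) : ℝ) : ℂ)⁻¹ • ((A.det : ℂ) • D + C * D * Cᴴ) := by
    have hc' : ((-(2 * A.trace * A.det) : ℝ) : ℂ) ≠ 0 := Complex.ofReal_ne_zero.mpr hc.ne'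
    rw [← key, smul_smul]
    push_cast at hc' ⊢
    rw [inv_mul_cancel₀ hc', one_smul]
  rw [hQ, ← Complex.ofReal_inv]
  exact ((hD.smul (Complex.zero_le_real.mpr hd.le)).add (hD.mul_mul_conjTranspose_same C)).smul
    (Complex.zero_le_real.mpr (inv_nonneg.mpr hc.le))

lemma posSemidef_cplx_add_I_smul_cplx {m : ℕ} {A : Matrix (Fin 2) (Fin 2) ℝ}
    (ht : A.trace < 0) (hd : 0 < A.det) {B : Matrix (Fin 2) (Fin m) ℝ}
    {S : Matrix (Fin m) (Fin m) ℝ} {T : Matrix (Fin m) (Fin m) ℂ} {J X : Matrix (Fin 2) (Fin 2) ℝ}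
    (hST : (S.cplx + T).PosSemidef)
    (hJ : A.cplx * J.cplx + J.cplx * A.cplxᵀ - Complex.I • (B.cplx * T * B.cplxᵀ) = 0)
    (hX : A * X + X * Aᵀ + B * S * Bᵀ = 0) :
    (X.cplx + Complex.I • J.cplx).PosSemidef := by
  refine posSemidef_of_cplx_mul_add_mul_transpose_add_eq_zero ht hd
    (hST.mul_mul_conjTranspose_same B.cplx) ?_
  have hXc : A.cplx * X.cplx + X.cplx * A.cplxᵀ + B.cplx * S.cplx * B.cplxᵀ = 0 := by
    simpa using congrArg cplx hX
  have hJ' : Complex.I • (A.cplx * J.cplx + J.cplx * A.cplxᵀ) = -(B.cplx * T * B.cplxᵀ) := by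
    rw [sub_eq_zero.mp hJ, smul_smul, Complex.I_mul_I, neg_one_smul]
  rw [conjTranspose_cplx]
  simp only [Matrix.mul_add, Matrix.add_mul, Matrix.mul_smul, Matrix.smul_mul]
  linear_combination (norm := module) hXc + hJ'

lemma lyapunov_toBlocks_of_fromBlocks {R l n : Type*} [Ring R] [Fintype l] [Fintype n]
    {A₁ D₁ : Matrix l l R} {A₂ D₂ : Matrix n n R} {P : Matrix (l ⊕ n) (l ⊕ n) R}
    (h : fromBlocks A₁ 0 0 A₂ * P + P * (fromBlocks A₁ 0 0 A₂)ᵀ + fromBlocks D₁ 0 0 D₂ = 0) :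
    A₁ * P.toBlocks₁₁ + P.toBlocks₁₁ * A₁ᵀ + D₁ = 0 ∧ A₁ * P.toBlocks₁₂ + P.toBlocks₁₂ * A₂ᵀ = 0 ∧
      A₂ * P.toBlocks₂₁ + P.toBlocks₂₁ * A₁ᵀ = 0 ∧
      A₂ * P.toBlocks₂₂ + P.toBlocks₂₂ * A₂ᵀ + D₂ = 0 := by
  rw [← fromBlocks_toBlocks P, fromBlocks_transpose, fromBlocks_multiply, fromBlocks_multiply,
    fromBlocks_add, fromBlocks_add, ← fromBlocks_zero, fromBlocks_inj] at h
  simpa using h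

lemma PosSemidef.fromBlocks_zero {R l n : Type*} [Ring R] [PartialOrder R] [StarRing R]
    [AddLeftMono R] [Fintype l] [Fintype n]
    {X : Matrix l l R} {Y : Matrix n n R} (hX : X.PosSemidef) (hY : Y.PosSemidef) :
    (fromBlocks X 0 0 Y).PosSemidef := by
  refine .of_dotProduct_mulVec_nonneg (hX.isHermitian.fromBlocks (by simp) hY.isHermitian)
    fun x ↦ ?_
  have hx : star x ⬝ᵥ fromBlocks X 0 0 Y *ᵥ x = star (x ∘ Sum.inl) ⬝ᵥ X *ᵥ (x ∘ Sum.inl)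
      + star (x ∘ Sum.inr) ⬝ᵥ Y *ᵥ (x ∘ Sum.inr) := by
    simp [fromBlocks_mulVec, dotProduct, Fintype.sum_sum_type, Function.comp_def]
  rw [hx]
  exact add_nonneg (hX.dotProduct_mulVec_nonneg _) (hY.dotProduct_mulVec_nonneg _)

end Matrix

theorem unconnected_systems_steady_state_separable_general {m₁ m₂ : ℕ}
    (A₁ : Matrix (Fin 2) (Fin 2) ℝ) (A₂ : Matrix (Fin 2) (Fin 2) ℝ)
    (B₁ : Matrix (Fin 2) (Fin m₁) ℝ) (B₂ : Matrix (Fin 2) (Fin m₂) ℝ)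
    (Sw₁ : Matrix (Fin m₁) (Fin m₁) ℝ) (Sw₂ : Matrix (Fin m₂) (Fin m₂) ℝ)
    (Tw₁ : Matrix (Fin m₁) (Fin m₁) ℂ) (Tw₂ : Matrix (Fin m₂) (Fin m₂) ℂ)
    (P : Matrix (Fin 2 ⊕ Fin 2) (Fin 2 ⊕ Fin 2) ℝ)
    (hA₁ : A₁.cplx.IsHurwitz) (hA₂ : A₂.cplx.IsHurwitz)
    (hFw₁ : (Sw₁.cplx + Tw₁).PosSemidef) (hFw₂ : (Sw₂.cplx + Tw₂).PosSemidef)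
    (hComm₁ : A₁.cplx * Jmat.cplx + Jmat.cplx * A₁.cplxᵀ
        - Complex.I • (B₁.cplx * Tw₁ * B₁.cplxᵀ) = 0)
    (hComm₂ : A₂.cplx * Jmat.cplx + Jmat.cplx * A₂.cplxᵀ
        - Complex.I • (B₂.cplx * Tw₂ * B₂.cplxᵀ) = 0)
    (hP : P.IsSymm)
    (hLyap : fromBlocks A₁ 0 0 A₂ * P + P * (fromBlocks A₁ 0 0 A₂)ᵀ
        + fromBlocks (B₁ * Sw₁ * B₁ᵀ) 0 0 (B₂ * Sw₂ * B₂ᵀ) = 0) :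
    (P.cplx + Complex.I • (fromBlocks Jmat 0 0 (-Jmat)).cplx).PosSemidef := by
  obtain ⟨ht₁, hd₁⟩ := trace_neg_and_det_pos_of_isHurwitz hA₁
  obtain ⟨ht₂, hd₂⟩ := trace_neg_and_det_pos_of_isHurwitz hA₂
  obtain ⟨h₁₁, h₁₂, h₂₁, h₂₂⟩ := lyapunov_toBlocks_of_fromBlocks hLyap
  have hP₁₂ := eq_zero_of_mul_add_mul_transpose_eq_zero ht₁ hd₁ ht₂ hd₂ h₁₂
  have hP₂₁ := eq_zero_of_mul_add_mul_transpose_eq_zero ht₂ hd₂ ht₁ hd₁ h₂₁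
  have hQ₁ := posSemidef_cplx_add_I_smul_cplx ht₁ hd₁ hFw₁ hComm₁ h₁₁
  have hQ₂ := (posSemidef_cplx_add_I_smul_cplx ht₂ hd₂ hFw₂ hComm₂ h₂₂).transpose
  have hP₂₂ : P.toBlocks₂₂ᵀ = P.toBlocks₂₂ :=
    (isSymm_fromBlocks_iff.mp ((fromBlocks_toBlocks P).symm ▸ hP)).2.2.2
  have hJ : Jmat.cplxᵀ = -Jmat.cplx := by
    ext i j; fin_cases i <;> fin_cases j <;> simp [Jmat]
  convert PosSemidef.fromBlocks_zero hQ₁ hQ₂ using 1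
  rw [← fromBlocks_toBlocks P, hP₁₂, hP₂₁, cplx_fromBlocks, cplx_fromBlocks]
  simp [fromBlocks_smul, fromBlocks_add, transpose_add, ← cplx_transpose, hP₂₂, hJ]

/-- **Two independent, unconnected stable Gaussian systems are separable at steady state.**
For `k = 1, 2` let `A_k` be real `2×2` Hurwitz, `S_{wk}` real symmetric, `T_{wk}` Hermitian
with `S_{wk} + T_{wk} ⪰ 0` and `A_k J + J A_kᵀ - i B_k T_{wk} B_kᵀ = 0`.  If the real
symmetric `4×4` matrix `P` satisfies the steady-state Lyapunov equation of the uncoupled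
system `diag(A₁,A₂)`, then `P + i·diag(J,-J) ⪰ 0`, i.e. the steady state is separable even
if the initial state was entangled. -/
theorem unconnected_systems_steady_state_separable {m₁ m₂ : ℕ}
    (A₁ : Matrix (Fin 2) (Fin 2) ℝ) (A₂ : Matrix (Fin 2) (Fin 2) ℝ)
    (B₁ : Matrix (Fin 2) (Fin m₁) ℝ) (B₂ : Matrix (Fin 2) (Fin m₂) ℝ)
    (Sw₁ : Matrix (Fin m₁) (Fin m₁) ℝ) (Sw₂ : Matrix (Fin m₂) (Fin m₂) ℝ)
    (Tw₁ : Matrix (Fin m₁) (Fin m₁) ℂ) (Tw₂ : Matrix (Fin m₂) (Fin m₂) ℂ)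
    (P : Matrix (Fin 2 ⊕ Fin 2) (Fin 2 ⊕ Fin 2) ℝ)
    (hA₁ : A₁.cplx.IsHurwitz) (hA₂ : A₂.cplx.IsHurwitz)
    (hSw₁ : Sw₁.IsSymm) (hSw₂ : Sw₂.IsSymm)
    (hTw₁ : Tw₁.IsHermitian) (hTw₂ : Tw₂.IsHermitian)
    (hFw₁ : (Sw₁.cplx + Tw₁).PosSemidef) (hFw₂ : (Sw₂.cplx + Tw₂).PosSemidef)
    (hComm₁ : A₁.cplx * Jmat.cplx + Jmat.cplx * A₁.cplxᵀ
        - Complex.I • (B₁.cplx * Tw₁ * B₁.cplxᵀ) = 0)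
    (hComm₂ : A₂.cplx * Jmat.cplx + Jmat.cplx * A₂.cplxᵀ
        - Complex.I • (B₂.cplx * Tw₂ * B₂.cplxᵀ) = 0)
    (hP : P.IsSymm)
    (hLyap : fromBlocks A₁ 0 0 A₂ * P + P * (fromBlocks A₁ 0 0 A₂)ᵀ
        + fromBlocks (B₁ * Sw₁ * B₁ᵀ) 0 0 (B₂ * Sw₂ * B₂ᵀ) = 0) :
    (P.cplx + Complex.I • (fromBlocks Jmat 0 0 (-Jmat)).cplx).PosSemidef :=
  unconnected_systems_steady_state_separable_general A₁ A₂ B₁ B₂ Sw₁ Sw₂ Tw₁ Tw₂ P hA₁ hA₂ hFw₁ hFw₂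
    hComm₁ hComm₂ hP hLyap
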